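/- Let Z₁, Z₂ ∈ ℝⁿ, Y ∈ ℝⁿ, and λ > 0. Write Z₁∘Z₂ for the entrywise product. Consider (A) the group-lasso problem: minimize over (μ, β₁, β₂, β₁:₂) ∈ ℝ × ℝ × ℝ × ℝ⁴ the objective (1/2)‖Y − μ·1 − β₁Z₁ − β₂Z₂ − [1 Z₁ Z₂ (Z₁∘Z₂)]β₁:₂‖₂² + λ(|β₁| + |β₂| + ‖β₁:₂‖₂); and (B) the overlapped problem: minimize over (μ, μ̃, α₁, α₂, α̃₁, α̃₂, α₁:₂) ∈ ℝ⁷ the objective (1/2)‖Y − μ·1 − α₁Z₁ − α₂Z₂ − μ̃·1 − α̃₁Z₁ − α̃₂Z₂ − α₁:₂(Z₁∘Z₂)‖₂² + λ(|α₁| + |α₂| + √(μ̃² + α̃₁² + α̃₂² + α₁:₂²)). Then the two problems are equivalent: their infima are equal, the map (μ, μ̃, α₁, α₂, α̃₁, α̃₂, α₁:₂) ↦ (μ, α₁, α₂, (μ̃, α̃₁, α̃₂, α₁:₂)) sends minimizers of (B) to minimizers of (A) and every minimizer of (A) arises this way; moreover every minimizer of (B) has μ̃ = 0. -/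
import Mathlib


open scoped BigOperators

noncomputable section

/-- Euclidean norm of a finitely indexed vector. -/
def norm2 {m : Type*} [Fintype m] (v : m → ℝ) : ℝ := Real.sqrt (∑ i, v i ^ 2)

/-- The `n×4` matrix `[1  Z₁  Z₂  (Z₁∘Z₂)]`. -/
def Mmat {n : ℕ} (Z₁ Z₂ : Fin n → ℝ) : Matrix (Fin n) (Fin 4) ℝ :=
  fun k => ![1, Z₁ k, Z₂ k, Z₁ k * Z₂ k]

/-- Objective of the group-lasso problem (A), variables `(μ, β₁, β₂, β₁:₂) ∈ ℝ×ℝ×ℝ×ℝ⁴`. -/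
def objA {n : ℕ} (Z₁ Z₂ Y : Fin n → ℝ) (lam : ℝ)
    (p : ℝ × ℝ × ℝ × (Fin 4 → ℝ)) : ℝ :=
  (1 / 2) * (∑ k, (Y k - p.1 - p.2.1 * Z₁ k - p.2.2.1 * Z₂ k
      - (Mmat Z₁ Z₂).mulVec p.2.2.2 k) ^ 2)
    + lam * (|p.2.1| + |p.2.2.1| + norm2 p.2.2.2)

/-- Objective of the overlapped problem (B), variables
`(μ, μ̃, α₁, α₂, α̃₁, α̃₂, α₁:₂) ∈ ℝ⁷`. -/
def objB {n : ℕ} (Z₁ Z₂ Y : Fin n → ℝ) (lam : ℝ)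
    (q : ℝ × ℝ × ℝ × ℝ × ℝ × ℝ × ℝ) : ℝ :=
  (1 / 2) * (∑ k, (Y k - q.1 - q.2.2.1 * Z₁ k - q.2.2.2.1 * Z₂ k - q.2.1
      - q.2.2.2.2.1 * Z₁ k - q.2.2.2.2.2.1 * Z₂ k - q.2.2.2.2.2.2 * (Z₁ k * Z₂ k)) ^ 2)
    + lam * (|q.2.2.1| + |q.2.2.2.1|
      + Real.sqrt (q.2.1 ^ 2 + q.2.2.2.2.1 ^ 2 + q.2.2.2.2.2.1 ^ 2 + q.2.2.2.2.2.2 ^ 2))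

/-- The map `(μ, μ̃, α₁, α₂, α̃₁, α̃₂, α₁:₂) ↦ (μ, α₁, α₂, (μ̃, α̃₁, α̃₂, α₁:₂))`. -/
def toA (q : ℝ × ℝ × ℝ × ℝ × ℝ × ℝ × ℝ) : ℝ × ℝ × ℝ × (Fin 4 → ℝ) :=
  (q.1, q.2.2.1, q.2.2.2.1, ![q.2.1, q.2.2.2.2.1, q.2.2.2.2.2.1, q.2.2.2.2.2.2])

def fromA (p : ℝ × ℝ × ℝ × (Fin 4 → ℝ)) : ℝ × ℝ × ℝ × ℝ × ℝ × ℝ × ℝ :=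
  (p.1, p.2.2.2 0, p.2.1, p.2.2.1, p.2.2.2 1, p.2.2.2 2, p.2.2.2 3)

lemma vec4_eta (v : Fin 4 → ℝ) : ![v 0, v 1, v 2, v 3] = v := by
  funext i; fin_cases i <;> rfl

lemma toA_fromA (p : ℝ × ℝ × ℝ × (Fin 4 → ℝ)) : toA (fromA p) = p := by
  obtain ⟨μ, b1, b2, b⟩ := p
  simp [toA, fromA, vec4_eta]

lemma objA_toA {n : ℕ} (Z₁ Z₂ Y : Fin n → ℝ) (lam : ℝ)
    (q : ℝ × ℝ × ℝ × ℝ × ℝ × ℝ × ℝ) :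
    objA Z₁ Z₂ Y lam (toA q) = objB Z₁ Z₂ Y lam q := by
  obtain ⟨μ, μt, a1, a2, b1, b2, b3⟩ := q
  simp only [objA, objB, toA, norm2, Mmat, Matrix.mulVec, dotProduct,
    Fin.sum_univ_four, Matrix.cons_val_zero, Matrix.cons_val_one, Matrix.head_cons,
    Matrix.cons_val_two, Matrix.tail_cons, Matrix.cons_val_three]
  congr 1
  congr 1
  exact Finset.sum_congr rfl fun k _ => by ring

/-- For two continuous variables, the group-lasso problem (A) and the
overlapped problem (B) are equivalent: their infima coincide, `toA` maps minimizers of (B)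
to minimizers of (A), every minimizer of (A) arises this way, and every minimizer of (B)
has `μ̃ = 0`. -/
theorem stmt_14 (n : ℕ) (Z₁ Z₂ Y : Fin n → ℝ) (lam : ℝ) (hlam : 0 < lam) :
    (sInf (Set.range (objA Z₁ Z₂ Y lam)) = sInf (Set.range (objB Z₁ Z₂ Y lam))) ∧
    (∀ q, (∀ q', objB Z₁ Z₂ Y lam q ≤ objB Z₁ Z₂ Y lam q') →
      ∀ p, objA Z₁ Z₂ Y lam (toA q) ≤ objA Z₁ Z₂ Y lam p) ∧
    (∀ p, (∀ p', objA Z₁ Z₂ Y lam p ≤ objA Z₁ Z₂ Y lam p') →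
      ∃ q, (∀ q', objB Z₁ Z₂ Y lam q ≤ objB Z₁ Z₂ Y lam q') ∧ toA q = p) ∧
    (∀ q, (∀ q', objB Z₁ Z₂ Y lam q ≤ objB Z₁ Z₂ Y lam q') → q.2.1 = 0) := by
  have key : ∀ q, objA Z₁ Z₂ Y lam (toA q) = objB Z₁ Z₂ Y lam q := objA_toA Z₁ Z₂ Y lam
  have hrange : Set.range (objA Z₁ Z₂ Y lam) = Set.range (objB Z₁ Z₂ Y lam) := by
    ext x
    constructor
    · rintro ⟨p, rfl⟩
      exact ⟨fromA p, by rw [← key, toA_fromA]⟩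
    · rintro ⟨q, rfl⟩
      exact ⟨toA q, key q⟩
  refine ⟨by rw [hrange], ?_, ?_, ?_⟩
  · intro q hq p
    rw [key]
    calc objB Z₁ Z₂ Y lam q ≤ objB Z₁ Z₂ Y lam (fromA p) := hq _
      _ = objA Z₁ Z₂ Y lam p := by rw [← key, toA_fromA]
  · intro p hp
    refine ⟨fromA p, ?_, toA_fromA p⟩
    intro q'
    rw [← key, toA_fromA, ← key]
    exact hp _
  · intro q hq
    by_contra hne
    obtain ⟨μ, μt, a1, a2, b1, b2, b3⟩ := q
    have hμt : (0:ℝ) < μt ^ 2 := by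
      have h0 : μt ≠ 0 := hne
      positivity
    have hlt : Real.sqrt ((0:ℝ) ^ 2 + b1 ^ 2 + b2 ^ 2 + b3 ^ 2)
        < Real.sqrt (μt ^ 2 + b1 ^ 2 + b2 ^ 2 + b3 ^ 2) := by
      apply Real.sqrt_lt_sqrt (by positivity)
      nlinarith
    have hlt2 : objB Z₁ Z₂ Y lam (μ + μt, 0, a1, a2, b1, b2, b3)
        < objB Z₁ Z₂ Y lam (μ, μt, a1, a2, b1, b2, b3) := by
      simp only [objB]
      apply add_lt_add_of_le_of_lt
      · apply le_of_eq
        apply congrArg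
        exact Finset.sum_congr rfl fun k _ => by ring
      · exact mul_lt_mul_of_pos_left (by linarith) hlam
    exact absurd hlt2 (not_lt.2 (hq _))

end
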